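/- arXiv:1804.06540 — 2 statements merged into one kernel-verified Lean document; each statement's English description precedes it below -/
import Mathlib

section
/- Let N be an n×n real symmetric positive definite matrix whose off-diagonal entries are all nonpositive, and let P be an n×n nonnegative diagonal matrix. Then entrywise 0 ≤ ((N + P)^{-1})_{ij} ≤ (N^{-1})_{ij} for all i, j. -/
/-! If `N` is a positive definite Z-matrix and `N x ≥ 0`, then `d = |x| - x ≥ 0` satisfies
`dᵀ N d ≤ 0`, because the sign pattern of `N` gives `|x|ᵀ N |x| ≤ xᵀ N x`; hence `d = 0` and
`x ≥ 0`, so `N⁻¹ ≥ 0` entrywise. `N + P` is again a positive definite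
Z-matrix, and `N⁻¹ - (N + P)⁻¹ = N⁻¹ P (N + P)⁻¹` is a product of entrywise nonnegative matrices. -/

open Matrix

namespace Matrix

variable {ι : Type*}

def IsZMatrix (N : Matrix ι ι ℝ) : Prop := ∀ i j, i ≠ j → N i j ≤ 0

theorem IsZMatrix.add_diagonal [DecidableEq ι] {N : Matrix ι ι ℝ} (hN : N.IsZMatrix)
    (p : ι → ℝ) : (N + diagonal p).IsZMatrix := fun i j hij => by
  simpa [diagonal_apply_ne _ hij] using hN i j hij

variable [Fintype ι]

theorem IsZMatrix.abs_dotProduct_mulVec_abs_le {N : Matrix ι ι ℝ} (hN : N.IsZMatrix)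
    (x : ι → ℝ) : |x| ⬝ᵥ (N *ᵥ |x|) ≤ x ⬝ᵥ (N *ᵥ x) := by
  simp only [dotProduct, mulVec, Finset.mul_sum, Pi.abs_apply]
  refine Finset.sum_le_sum fun a _ => Finset.sum_le_sum fun b _ => ?_
  rw [mul_left_comm, mul_left_comm (x a)]
  rcases eq_or_ne a b with rfl | hab
  · rw [abs_mul_abs_self]
  · exact mul_le_mul_of_nonpos_left (by rw [← abs_mul]; exact le_abs_self _) (hN a b hab)

theorem IsHermitian.dotProduct_mulVec_comm {N : Matrix ι ι ℝ} (hN : N.IsHermitian)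
    (x y : ι → ℝ) : x ⬝ᵥ (N *ᵥ y) = y ⬝ᵥ (N *ᵥ x) := by
  rw [dotProduct_mulVec, dotProduct_comm, ← vecMul_transpose,
    ← conjTranspose_eq_transpose_of_trivial, hN]

theorem PosDef.nonneg_of_mulVec_nonneg {N : Matrix ι ι ℝ} (hN : N.PosDef) (hZ : N.IsZMatrix)
    {x : ι → ℝ} (hx : 0 ≤ N *ᵥ x) : 0 ≤ x := by
  set d := |x| - x
  have hd : 0 ≤ d := sub_nonneg.mpr (le_abs_self x)
  have hquad : d ⬝ᵥ (N *ᵥ d) ≤ 0 := calc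
    d ⬝ᵥ (N *ᵥ d) = |x| ⬝ᵥ (N *ᵥ |x|) + x ⬝ᵥ (N *ᵥ x) - 2 * (|x| ⬝ᵥ (N *ᵥ x)) := by
      simp only [d, mulVec_sub, sub_dotProduct, dotProduct_sub,
        hN.isHermitian.dotProduct_mulVec_comm x |x|]
      ring
    _ ≤ 2 * (x ⬝ᵥ (N *ᵥ x)) - 2 * (|x| ⬝ᵥ (N *ᵥ x)) := by
      linarith [hZ.abs_dotProduct_mulVec_abs_le x]
    _ = -2 * (d ⬝ᵥ (N *ᵥ x)) := by simp only [d, sub_dotProduct]; ring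
    _ ≤ 0 := by linarith [dotProduct_nonneg_of_nonneg hd hx]
  have hd0 : d = 0 := by
    by_contra hne
    have := hN.dotProduct_mulVec_pos hne
    rw [star_trivial] at this
    linarith
  exact (abs_nonneg x).trans_eq (sub_eq_zero.mp hd0)

theorem PosDef.inv_apply_nonneg [DecidableEq ι] {N : Matrix ι ι ℝ} (hN : N.PosDef)
    (hZ : N.IsZMatrix) (i j : ι) : 0 ≤ N⁻¹ i j := by
  have hcol : N *ᵥ (N⁻¹ *ᵥ Pi.single j 1) = Pi.single j 1 := by
    rw [mulVec_mulVec, mul_nonsing_inv _ ((isUnit_iff_isUnit_det N).mp hN.isUnit), one_mulVec]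
  have := hN.nonneg_of_mulVec_nonneg hZ (hcol ▸ Pi.single_nonneg.mpr zero_le_one) i
  simpa [mulVec_single_one] using this

end Matrix

/-- Let `N` be an `n×n` real symmetric positive definite matrix with
nonpositive off-diagonal entries, and `P` a nonnegative diagonal matrix. Then entrywise
`0 ≤ ((N + P)⁻¹)_{ij} ≤ (N⁻¹)_{ij}` for all `i, j`. -/
theorem inv_entrywise_monotone {n : ℕ}
    (N : Matrix (Fin n) (Fin n) ℝ) (hN : N.PosDef)
    (hoff : ∀ i j : Fin n, i ≠ j → N i j ≤ 0)
    (p : Fin n → ℝ) (hp : ∀ i, 0 ≤ p i) :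
    ∀ i j : Fin n, 0 ≤ (N + diagonal p)⁻¹ i j ∧ (N + diagonal p)⁻¹ i j ≤ N⁻¹ i j := by
  have hZ : N.IsZMatrix := hoff
  have hM : (N + diagonal p).PosDef := hN.add_posSemidef (posSemidef_diagonal_iff.mpr hp)
  have hMinv := hM.inv_apply_nonneg (hZ.add_diagonal p)
  intro i j
  refine ⟨hMinv i j, sub_nonneg.mp ?_⟩
  rw [← Matrix.sub_apply, inv_sub_inv (iff_of_true hN.isUnit hM.isUnit), add_sub_cancel_left,
    mul_apply]
  simp only [mul_diagonal]
  exact Finset.sum_nonneg fun k _ =>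
    mul_nonneg (mul_nonneg (hN.inv_apply_nonneg hZ i k) (hp k)) (hMinv k j)
end

section
/- (Lemma 2.) Let L be the Laplacian matrix of a connected weighted undirected graph on n ≥ 2 vertices, let u ≠ v be vertices, let w > 0, set b := e_u − e_v, and let L' := L + w b b^T. For a Laplacian M write R_v(M) := n(M†)_{vv} + Tr(M†), where M† = (M + (1/n)J)^{-1} − (1/n)J. Then the decrease in resistance distance of v upon adding the edge satisfies R_v(L) − R_v(L') = w · ( n (L† b b^T L†)_{vv} + Tr(L† b b^T L†) ) / (1 + w · b^T L† b). -/
open Matrix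

/-! For `K = L + n⁻¹ • J` we have `L† = K⁻¹ - n⁻¹ • J`, and `K` is positive definite because `L`
is positive semidefinite with kernel spanned by `1`, on which `J` is positive. Since `J b = 0`,
adding the edge changes `K` by the rank-one term `w b bᵀ`, and the Sherman–Morrison formula gives
`L'† = L† - w / (1 + w bᵀ L† b) • L† b bᵀ L†`; the denominator is positive as `K⁻¹` is positive
semidefinite. Reading off the `(v, v)` entry and the trace gives the formula. -/

namespace Matrix

variable {ι 𝕜 : Type*} [Fintype ι]

section ShermanMorrison

variable [DecidableEq ι] [Field 𝕜]

/-- The Sherman–Morrison formula. -/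
theorem inv_add_smul_vecMulVec {A : Matrix ι ι 𝕜} (hA : IsUnit A) (b c : ι → 𝕜) (w : 𝕜)
    (hden : 1 + w * (c ⬝ᵥ A⁻¹ *ᵥ b) ≠ 0) :
    (A + w • vecMulVec b c)⁻¹ =
      A⁻¹ - (w / (1 + w * (c ⬝ᵥ A⁻¹ *ᵥ b))) • (A⁻¹ * vecMulVec b c * A⁻¹) := by
  set s := c ⬝ᵥ A⁻¹ *ᵥ b
  set t := w / (1 + w * s)
  have hAA : A * A⁻¹ = 1 := mul_nonsing_inv A ((isUnit_iff_isUnit_det A).mp hA)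
  have hBAB : vecMulVec b c * A⁻¹ * vecMulVec b c = s • vecMulVec b c := by
    rw [Matrix.mul_assoc, mul_vecMulVec, vecMulVec_mul_vecMulVec, vecMulVec_smul]
  have hcoef : w - t - w * t * s = 0 := by
    simp only [t]; field_simp; ring
  refine inv_eq_right_inv ?_
  calc (A + w • vecMulVec b c) * (A⁻¹ - t • (A⁻¹ * vecMulVec b c * A⁻¹))
      = 1 + (w - t - w * t * s) • (vecMulVec b c * A⁻¹) := by
        simp only [Matrix.add_mul, Matrix.mul_sub, Matrix.mul_smul, Matrix.smul_mul, hAA,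
          ← Matrix.mul_assoc, Matrix.one_mul, hBAB]
        module
    _ = 1 := by rw [hcoef, zero_smul, add_zero]

/-- With `A = L + n⁻¹ • J` and `E = n⁻¹ • J`, this updates the pseudoinverse `A⁻¹ - E` of a
Laplacian `L`. -/
theorem inv_add_smul_vecMulVec_sub {A : Matrix ι ι 𝕜} (hA : IsUnit A) (E : Matrix ι ι 𝕜)
    {b c : ι → 𝕜} (hEb : E *ᵥ b = 0) (hcE : c ᵥ* E = 0) (w : 𝕜)
    (hden : 1 + w * (c ⬝ᵥ (A⁻¹ - E) *ᵥ b) ≠ 0) :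
    (A + w • vecMulVec b c)⁻¹ - E =
      A⁻¹ - E - (w / (1 + w * (c ⬝ᵥ (A⁻¹ - E) *ᵥ b))) •
        ((A⁻¹ - E) * vecMulVec b c * (A⁻¹ - E)) := by
  have hDb : (A⁻¹ - E) *ᵥ b = A⁻¹ *ᵥ b := by rw [sub_mulVec, hEb, sub_zero]
  have hDBD : (A⁻¹ - E) * vecMulVec b c * (A⁻¹ - E) = A⁻¹ * vecMulVec b c * A⁻¹ := by
    rw [Matrix.sub_mul A⁻¹ E, mul_vecMulVec E, hEb, zero_vecMulVec, sub_zero,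
      Matrix.mul_sub, Matrix.mul_assoc _ _ E, vecMulVec_mul, hcE, vecMulVec_zero,
      Matrix.mul_zero, sub_zero]
  rw [hDb] at hden ⊢
  rw [hDBD, inv_add_smul_vecMulVec hA b c w hden]
  abel

end ShermanMorrison

theorem dotProduct_mulVec_eq_sum_sq_of_sum_eq_zero {L : Matrix ι ι ℝ} (hsym : L.IsSymm)
    (hrow : ∀ i, ∑ j, L i j = 0) (x : ι → ℝ) :
    x ⬝ᵥ L *ᵥ x = ∑ i, ∑ j, -L i j * (x i - x j) ^ 2 / 2 := by
  have hcol : ∀ j, ∑ i, L i j = 0 := fun j => by simpa only [hsym.apply] using hrow j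
  have hi : ∑ i, ∑ j, L i j * x i ^ 2 = 0 := by simp [← Finset.sum_mul, hrow]
  have hj : ∑ i, ∑ j, L i j * x j ^ 2 = 0 := by
    rw [Finset.sum_comm]; simp [← Finset.sum_mul, hcol]
  have hexpand : ∀ i j, -L i j * (x i - x j) ^ 2 / 2
      = x i * (L i j * x j) - L i j * x i ^ 2 / 2 - L i j * x j ^ 2 / 2 := fun i j => by ring
  simp only [hexpand, Finset.sum_sub_distrib, ← Finset.sum_div, hi, hj, zero_div, sub_zero]
  simp only [dotProduct, mulVec, Finset.mul_sum]

theorem posSemidef_of_offDiag_nonpos_of_sum_eq_zero {L : Matrix ι ι ℝ} (hsym : L.IsSymm)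
    (hoff : ∀ i j, i ≠ j → L i j ≤ 0) (hrow : ∀ i, ∑ j, L i j = 0) : L.PosSemidef := by
  refine .of_dotProduct_mulVec_nonneg (isHermitian_iff_isSymm.mpr hsym) fun x => ?_
  rw [star_trivial, dotProduct_mulVec_eq_sum_sq_of_sum_eq_zero hsym hrow]
  refine Finset.sum_nonneg fun i _ => Finset.sum_nonneg fun j _ => ?_
  rcases eq_or_ne i j with rfl | hij
  · simp
  · exact div_nonneg (mul_nonneg (neg_nonneg.mpr (hoff i j hij)) (sq_nonneg _)) zero_le_two

theorem dotProduct_allOnes_mulVec (x : ι → ℝ) :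
    x ⬝ᵥ (of fun _ _ : ι => (1 : ℝ)) *ᵥ x = (∑ i, x i) ^ 2 := by
  simp only [dotProduct, mulVec, of_apply, one_mul, sq, Finset.sum_mul, Finset.mul_sum]
  exact Finset.sum_comm

theorem posDef_add_smul_allOnes {L : Matrix ι ι ℝ} (hL : L.PosSemidef)
    (hker : ∀ x, L *ᵥ x = 0 → ∃ a : ℝ, x = fun _ => a) {c : ℝ} (hc : 0 < c) :
    (L + c • of fun _ _ : ι => (1 : ℝ)).PosDef := by
  have hJ : (of fun _ _ : ι => (1 : ℝ)).IsHermitian :=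
    isHermitian_iff_isSymm.mpr (IsSymm.ext fun _ _ => rfl)
  refine .of_dotProduct_mulVec_pos (hL.isHermitian.add (hJ.smul (IsSelfAdjoint.all c)))
    fun x hx => ?_
  rw [star_trivial, add_mulVec, dotProduct_add, smul_mulVec, dotProduct_smul,
    dotProduct_allOnes_mulVec, smul_eq_mul]
  have hLx := hL.dotProduct_mulVec_nonneg x
  rw [star_trivial] at hLx
  by_contra! hle
  have hLx0 : L *ᵥ x = 0 := by
    rw [← hL.dotProduct_mulVec_zero_iff, star_trivial]
    nlinarith [sq_nonneg (∑ i, x i)]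
  have hsum : (∑ i, x i) ^ 2 = 0 := by nlinarith [sq_nonneg (∑ i, x i)]
  obtain ⟨i, hi⟩ : ∃ i, x i ≠ 0 := by simpa [funext_iff] using hx
  obtain ⟨a, rfl⟩ := hker x hLx0
  have : Nonempty ι := ⟨i⟩
  have : (Fintype.card ι : ℝ) ≠ 0 := Nat.cast_ne_zero.mpr Fintype.card_ne_zero
  simp_all [Finset.sum_const]

end Matrix

theorem resistance_decrease_formula_general {n : ℕ} (hn : 2 ≤ n)
    (L : Matrix (Fin n) (Fin n) ℝ)
    (hsym : L.IsSymm)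
    (hoff : ∀ i j : Fin n, i ≠ j → L i j ≤ 0)
    (hrow : ∀ i : Fin n, ∑ j, L i j = 0)
    (hker : ∀ x : Fin n → ℝ, L *ᵥ x = 0 ↔ ∃ c : ℝ, x = fun _ => c)
    (J : Matrix (Fin n) (Fin n) ℝ) (hJ : J = of fun _ _ => (1 : ℝ))
    (u v : Fin n) (w : ℝ) (hw : 0 < w)
    (b : Fin n → ℝ) (hb : b = Pi.single u 1 - Pi.single v 1)
    (L' : Matrix (Fin n) (Fin n) ℝ) (hL' : L' = L + w • vecMulVec b b)
    (dag : Matrix (Fin n) (Fin n) ℝ → Matrix (Fin n) (Fin n) ℝ)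
    (hdag : ∀ M : Matrix (Fin n) (Fin n) ℝ,
      dag M = (M + (n : ℝ)⁻¹ • J)⁻¹ - (n : ℝ)⁻¹ • J)
    (Rv : Matrix (Fin n) (Fin n) ℝ → ℝ)
    (hRv : ∀ M : Matrix (Fin n) (Fin n) ℝ,
      Rv M = (n : ℝ) * (dag M) v v + (dag M).trace) :
    Rv L - Rv L' =
      w * ((n : ℝ) * (dag L * vecMulVec b b * dag L) v v +
          (dag L * vecMulVec b b * dag L).trace) /
        (1 + w * (b ⬝ᵥ (dag L *ᵥ b))) := by
  have hK : (L + (n : ℝ)⁻¹ • J).PosDef := by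
    have hn' : (0 : ℝ) < n := by exact_mod_cast (by omega : 0 < n)
    rw [hJ]
    exact posDef_add_smul_allOnes (posSemidef_of_offDiag_nonpos_of_sum_eq_zero hsym hoff hrow)
      (fun x => (hker x).1) (inv_pos.mpr hn')
  have hbsum : ∑ i, b i = 0 := by simp [hb, Finset.sum_sub_distrib]
  have hJb : ((n : ℝ)⁻¹ • J) *ᵥ b = 0 := by
    ext; simp [hJ, mulVec, dotProduct, ← Finset.mul_sum, hbsum]
  have hbJ : b ᵥ* ((n : ℝ)⁻¹ • J) = 0 := by
    ext; simp [hJ, vecMul, dotProduct, ← Finset.sum_mul, hbsum]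
  have hdagL : dag L = (L + (n : ℝ)⁻¹ • J)⁻¹ - (n : ℝ)⁻¹ • J := hdag L
  have hs : 0 ≤ b ⬝ᵥ dag L *ᵥ b := by
    rw [hdagL, sub_mulVec, hJb, sub_zero]
    simpa using hK.posSemidef.inv.dotProduct_mulVec_nonneg b
  have hupdate : dag L' = dag L - (w / (1 + w * (b ⬝ᵥ dag L *ᵥ b))) •
      (dag L * vecMulVec b b * dag L) := by
    rw [hdag, hL', add_right_comm, hdagL]
    exact inv_add_smul_vecMulVec_sub hK.isUnit _ hJb hbJ w (by rw [← hdagL]; positivity)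
  rw [hRv, hRv, hupdate, Matrix.sub_apply, trace_sub, trace_smul, Matrix.smul_apply,
    smul_eq_mul, smul_eq_mul]
  ring

/-- Lemma 2: Let `L` be the Laplacian of a connected weighted undirected
graph on `n ≥ 2` vertices, `u ≠ v` vertices, `w > 0`, `b := e_u − e_v`, and
`L' := L + w b bᵀ`. With `R_v(M) := n (M†)_{vv} + Tr(M†)` where
`M† := (M + (1/n)J)⁻¹ − (1/n)J`, the decrease in resistance distance of `v` satisfies
`R_v(L) − R_v(L') = w (n (L† b bᵀ L†)_{vv} + Tr(L† b bᵀ L†)) / (1 + w bᵀ L† b)`. -/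
theorem resistance_decrease_formula {n : ℕ} (hn : 2 ≤ n)
    (L : Matrix (Fin n) (Fin n) ℝ)
    (hsym : L.IsSymm)
    (hoff : ∀ i j : Fin n, i ≠ j → L i j ≤ 0)
    (hrow : ∀ i : Fin n, ∑ j, L i j = 0)
    (hker : ∀ x : Fin n → ℝ, L *ᵥ x = 0 ↔ ∃ c : ℝ, x = fun _ => c)
    (J : Matrix (Fin n) (Fin n) ℝ) (hJ : J = of fun _ _ => (1 : ℝ))
    (u v : Fin n) (huv : u ≠ v) (w : ℝ) (hw : 0 < w)
    (b : Fin n → ℝ) (hb : b = Pi.single u 1 - Pi.single v 1)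
    (L' : Matrix (Fin n) (Fin n) ℝ) (hL' : L' = L + w • vecMulVec b b)
    (dag : Matrix (Fin n) (Fin n) ℝ → Matrix (Fin n) (Fin n) ℝ)
    (hdag : ∀ M : Matrix (Fin n) (Fin n) ℝ,
      dag M = (M + (n : ℝ)⁻¹ • J)⁻¹ - (n : ℝ)⁻¹ • J)
    (Rv : Matrix (Fin n) (Fin n) ℝ → ℝ)
    (hRv : ∀ M : Matrix (Fin n) (Fin n) ℝ,
      Rv M = (n : ℝ) * (dag M) v v + (dag M).trace) :
    Rv L - Rv L' =
      w * ((n : ℝ) * (dag L * vecMulVec b b * dag L) v v +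
          (dag L * vecMulVec b b * dag L).trace) /
        (1 + w * (b ⬝ᵥ (dag L *ᵥ b))) :=
  resistance_decrease_formula_general hn L hsym hoff hrow hker J hJ u v w hw b hb L' hL' dag hdag Rv
    hRv
end
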